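/- arXiv:0901.2360 — 4 statements merged into one kernel-verified Lean document; each statement's English description precedes it below -/
import Mathlib

section
/- There exists a finitely additive probability measure v on the power set of [0,1] such that v(Q ∩ [0,1]) = 1 (where Q is the rationals) and v([a,b]) = b - a for all 0 ≤ a ≤ b ≤ 1; moreover any such v is not countably additive. -/
/-- The rationals in [0,1] as a set of reals. -/
def ratsIn01 : Set ℝ := Set.range ((↑) : ℚ → ℝ) ∩ Set.Icc 0 1

/-- `v` is a finitely additive probability measure on the power set of `[0,1]`. -/
def IsFAProb (v : Set ℝ → ℝ) : Prop :=
  (∀ A, A ⊆ Set.Icc (0:ℝ) 1 → v A ∈ Set.Icc (0:ℝ) 1) ∧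
  v ∅ = 0 ∧ v (Set.Icc 0 1) = 1 ∧
  ∀ A B, A ⊆ Set.Icc (0:ℝ) 1 → B ⊆ Set.Icc (0:ℝ) 1 → Disjoint A B →
    v (A ∪ B) = v A + v B

/-- `v` is finitely additive, concentrated on the rationals, and agrees with
length on closed intervals. -/
def SpecialFA (v : Set ℝ → ℝ) : Prop :=
  IsFAProb v ∧ v ratsIn01 = 1 ∧
  ∀ a b : ℝ, 0 ≤ a → a ≤ b → b ≤ 1 → v (Set.Icc a b) = b - a

/-- Countable additivity on the power set of `[0,1]`. -/
def CountablyAdditiveOn01 (v : Set ℝ → ℝ) : Prop :=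
  ∀ A : ℕ → Set ℝ, (∀ n, A n ⊆ Set.Icc (0:ℝ) 1) →
    Pairwise (Function.onFun Disjoint A) →
    HasSum (fun n => v (A n)) (v (⋃ n, A n))

/-!
Let `gridMeasure n` be the uniform probability on the grid `{1/n, …, n/n}`. Each of these is
finitely additive, gives the rationals full mass, and gives `[a, b]` mass within `1/n` of `b - a`.
A limit along a free ultrafilter on `ℕ` exists by compactness of `[0,1]^(Set ℝ)` and keeps the
first two properties exactly, while the third becomes `v [a, b] = b - a`.

Such a `v` cannot be countably additive: degenerate intervals show that points have mass `0`, so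
every countable subset of `[0,1]`, in particular `ℚ ∩ [0,1]`, would have mass `0`.
-/

open Filter Topology

open scoped Classical in
noncomputable def gridCount (n : ℕ) (A : Set ℝ) : ℕ :=
  ((Finset.Icc 1 n).filter fun k : ℕ => (k : ℝ) / n ∈ A).card

noncomputable def gridMeasure (n : ℕ) (A : Set ℝ) : ℝ := gridCount n A / n

lemma gridMeasure_eq_one {n : ℕ} (hn : 0 < n) {A : Set ℝ}
    (hA : ∀ k ∈ Finset.Icc 1 n, (k : ℝ) / n ∈ A) : gridMeasure n A = 1 := by
  classical
  rw [gridMeasure, gridCount, Finset.filter_true_of_mem hA, Nat.card_Icc, Nat.add_sub_cancel,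
    div_self (by positivity)]

lemma grid_mem_Icc {n k : ℕ} (hk : k ∈ Finset.Icc 1 n) : (k : ℝ) / n ∈ Set.Icc 0 1 := by
  rw [Finset.mem_Icc] at hk
  exact ⟨by positivity, div_le_one_of_le₀ (by exact_mod_cast hk.2) n.cast_nonneg⟩

lemma gridMeasure_mem_Icc (n : ℕ) (A : Set ℝ) : gridMeasure n A ∈ Set.Icc 0 1 := by
  classical
  refine ⟨by unfold gridMeasure; positivity, div_le_one_of_le₀ ?_ n.cast_nonneg⟩
  unfold gridCount
  exact_mod_cast (Finset.card_filter_le _ _).trans (Nat.card_Icc 1 n).le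

lemma isFAProb_gridMeasure {n : ℕ} (hn : 0 < n) : IsFAProb (gridMeasure n) := by
  classical
  refine ⟨fun A _ => gridMeasure_mem_Icc n A, by simp [gridMeasure, gridCount],
    gridMeasure_eq_one hn fun k hk => grid_mem_Icc hk, fun A B _ _ hAB => ?_⟩
  simp only [gridMeasure, gridCount, Set.mem_union, Finset.filter_or, ← add_div, ← Nat.cast_add]
  exact congrArg (fun c : ℕ => (c : ℝ) / n) <| Finset.card_union_of_disjoint <|
    Finset.disjoint_filter.2 fun _ _ hA hB => Set.disjoint_left.1 hAB hA hB

lemma gridMeasure_ratsIn01 {n : ℕ} (hn : 0 < n) : gridMeasure n ratsIn01 = 1 :=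
  gridMeasure_eq_one hn fun k hk => ⟨⟨(k : ℚ) / n, by push_cast; rfl⟩, grid_mem_Icc hk⟩

lemma gridCount_Icc {n : ℕ} (hn : 0 < n) {a b : ℝ} (hb : b ≤ 1) :
    gridCount n (Set.Icc a b) = (Finset.Icc (max 1 ⌈a * n⌉₊) ⌊b * n⌋₊).card := by
  have hn' : (0 : ℝ) < n := by exact_mod_cast hn
  unfold gridCount
  congr 1
  ext k
  simp only [Finset.mem_filter, Finset.mem_Icc, Set.mem_Icc, le_div_iff₀ hn', div_le_iff₀ hn',
    max_le_iff, Nat.ceil_le]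
  constructor
  · rintro ⟨⟨hk1, -⟩, hak, hkb⟩
    exact ⟨⟨hk1, hak⟩, (Nat.le_floor_iff' (by omega)).2 hkb⟩
  · rintro ⟨⟨hk1, hak⟩, hkb⟩
    have hkb := (Nat.le_floor_iff' (by omega)).1 hkb
    refine ⟨⟨hk1, ?_⟩, hak, hkb⟩
    exact_mod_cast hkb.trans (mul_le_of_le_one_left hn'.le hb)

lemma abs_gridCount_Icc_sub_le {n : ℕ} (hn : 0 < n) {a b : ℝ} (ha : 0 ≤ a) (hab : a ≤ b)
    (hb : b ≤ 1) : |(gridCount n (Set.Icc a b) : ℝ) - n * (b - a)| ≤ 1 := by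
  rw [gridCount_Icc hn hb, Nat.card_Icc, abs_le]
  have han : 0 ≤ a * n := mul_nonneg ha n.cast_nonneg
  have hM := Nat.floor_le (mul_nonneg (ha.trans hab) n.cast_nonneg)
  have hM' := Nat.lt_floor_add_one (b * n)
  have hm : a * n ≤ (max 1 ⌈a * n⌉₊ : ℕ) :=
    (Nat.le_ceil _).trans (by exact_mod_cast le_max_right _ _)
  have hm' : ((max 1 ⌈a * n⌉₊ : ℕ) : ℝ) ≤ a * n + 1 := by
    rw [Nat.cast_max, Nat.cast_one]
    exact max_le (by linarith) (Nat.ceil_lt_add_one han).le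
  generalize max 1 ⌈a * n⌉₊ = m at hm hm' ⊢
  generalize ⌊b * n⌋₊ = M at hM hM' ⊢
  rcases le_or_gt m (M + 1) with h | h
  · rw [Nat.cast_sub h]
    push_cast
    constructor <;> linarith
  · have h' : (M : ℝ) + 1 < m := by exact_mod_cast h
    rw [Nat.sub_eq_zero_of_le h.le, Nat.cast_zero]
    constructor <;> nlinarith [mul_le_mul_of_nonneg_right hab n.cast_nonneg]

lemma tendsto_gridMeasure_Icc {a b : ℝ} (ha : 0 ≤ a) (hab : a ≤ b) (hb : b ≤ 1) :
    Tendsto (fun n => gridMeasure n (Set.Icc a b)) atTop (𝓝 (b - a)) := by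
  rw [tendsto_iff_dist_tendsto_zero]
  refine squeeze_zero' (Eventually.of_forall fun _ => dist_nonneg) ?_
    tendsto_one_div_atTop_nhds_zero_nat
  filter_upwards [eventually_gt_atTop 0] with n hn
  have hn' : (0 : ℝ) < n := by exact_mod_cast hn
  rw [Real.dist_eq, gridMeasure, div_sub' hn'.ne', abs_div, abs_of_pos hn']
  exact div_le_div_of_nonneg_right (abs_gridCount_Icc_sub_le hn ha hab hb) hn'.le

lemma IsFAProb.of_tendsto {ι : Type*} {l : Filter ι} [l.NeBot] {μ : ι → Set ℝ → ℝ}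
    {v : Set ℝ → ℝ} (hμ : ∀ᶠ i in l, IsFAProb (μ i))
    (hv : ∀ A, Tendsto (fun i => μ i A) l (𝓝 (v A))) : IsFAProb v := by
  have eq_of_eventually {A : Set ℝ} {c : ℝ} (h : ∀ᶠ i in l, μ i A = c) : v A = c :=
    tendsto_nhds_unique (hv A) (tendsto_const_nhds.congr' (h.mono fun _ => Eq.symm))
  refine ⟨fun A hA => isClosed_Icc.mem_of_tendsto (hv A) (hμ.mono fun i hi => hi.1 A hA),
    eq_of_eventually (hμ.mono fun i hi => hi.2.1),
    eq_of_eventually (hμ.mono fun i hi => hi.2.2.1), fun A B hA hB hAB => ?_⟩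
  exact tendsto_nhds_unique (hv _) (((hv A).add (hv B)).congr'
    (hμ.mono fun i hi => (hi.2.2.2 A B hA hB hAB).symm))

lemma exists_specialFA : ∃ v : Set ℝ → ℝ, SpecialFA v := by
  let U : Ultrafilter ℕ := Ultrafilter.of atTop
  have hU : (U : Filter ℕ) ≤ atTop := Ultrafilter.of_le _
  obtain ⟨v, -, hlim⟩ := (isCompact_univ_pi fun _ : Set ℝ => isCompact_Icc).ultrafilter_le_nhds
    (U.map gridMeasure)
    (le_principal_iff.2 <| mem_map.2 <| univ_mem' fun n A _ => gridMeasure_mem_Icc n A)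
  have hv : ∀ A, Tendsto (fun n => gridMeasure n A) U (𝓝 (v A)) := tendsto_pi_nhds.1 hlim
  have hpos : ∀ᶠ n in (U : Filter ℕ), 0 < n := hU (eventually_gt_atTop 0)
  refine ⟨v, IsFAProb.of_tendsto (hpos.mono fun _ => isFAProb_gridMeasure) hv, ?_,
    fun a b ha hab hb => ?_⟩
  · exact tendsto_nhds_unique (hv _)
      (tendsto_const_nhds.congr' (hpos.mono fun _ hn => (gridMeasure_ratsIn01 hn).symm))
  · exact tendsto_nhds_unique (hv _) ((tendsto_gridMeasure_Icc ha hab hb).mono_left hU)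

lemma CountablyAdditiveOn01.eq_zero_of_countable {v : Set ℝ → ℝ} (hv : CountablyAdditiveOn01 v)
    (h0 : v ∅ = 0) (hpt : ∀ x ∈ Set.Icc (0 : ℝ) 1, v {x} = 0) {S : Set ℝ} (hS : S.Countable)
    (hS01 : S ⊆ Set.Icc 0 1) : v S = 0 := by
  rcases S.eq_empty_or_nonempty with rfl | hne
  · exact h0
  obtain ⟨f, rfl⟩ := hS.exists_eq_range hne
  have hf (n : ℕ) : f n ∈ Set.Icc (0 : ℝ) 1 := hS01 ⟨n, rfl⟩
  let A := disjointed fun n => ({f n} : Set ℝ)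
  have hA_sub (n : ℕ) : A n ⊆ {f n} := disjointed_subset _ n
  have hA (n : ℕ) : v (A n) = 0 := by
    rcases Set.subset_singleton_iff_eq.1 (hA_sub n) with h | h <;> rw [h]
    exacts [h0, hpt _ (hf n)]
  have := hv A (fun n => (hA_sub n).trans (Set.singleton_subset_iff.2 (hf n)))
    (disjoint_disjointed _)
  rw [iUnion_disjointed, Set.iUnion_singleton_eq_range] at this
  simp only [hA] at this
  exact this.unique hasSum_zero

theorem stmt_0 :
    (∃ v : Set ℝ → ℝ, SpecialFA v) ∧
    ∀ v : Set ℝ → ℝ, SpecialFA v → ¬ CountablyAdditiveOn01 v := by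
  refine ⟨exists_specialFA, fun v ⟨⟨_, h0, _⟩, hrats, hIcc⟩ hv => ?_⟩
  have hpt (x : ℝ) (hx : x ∈ Set.Icc (0 : ℝ) 1) : v {x} = 0 := by
    simpa using hIcc x x hx.1 le_rfl hx.2
  have hcount : ratsIn01.Countable := (Set.countable_range _).mono Set.inter_subset_left
  have := hv.eq_zero_of_countable h0 hpt hcount Set.inter_subset_right
  rw [hrats] at this
  exact one_ne_zero this
end

section
/- Let player 1's measure on [0,1] have density 1.6 on (0,1/4)∪(1/2,3/4) and 0.4 elsewhere, and player 2's measure have density 1.6 on (1/4,1/2)∪(3/4,1) and 0.4 elsewhere. The allocation ([0,1/2], [1/2,1]) gives each player value 1/2, while allocating (0,1/4)∪(1/2,3/4) to player 1 and its complement to player 2 gives each player value 0.8. Hence the single-cut allocation at 1/2 is not weakly Pareto optimal. -/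
open MeasureTheory ENNReal

/-- Player 1's density: `1.6 = 8/5` on `(0,1/4) ∪ (1/2,3/4)`, `0.4 = 2/5` elsewhere. -/
noncomputable def f1 (x : ℝ) : ℝ≥0∞ :=
  if x ∈ Set.Ioo (0:ℝ) (1/4) ∪ Set.Ioo (1/2 : ℝ) (3/4) then 8/5 else 2/5

/-- Player 2's density: `1.6 = 8/5` on `(1/4,1/2) ∪ (3/4,1)`, `0.4 = 2/5` elsewhere. -/
noncomputable def f2 (x : ℝ) : ℝ≥0∞ :=
  if x ∈ Set.Ioo (1/4 : ℝ) (1/2) ∪ Set.Ioo (3/4 : ℝ) 1 then 8/5 else 2/5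

noncomputable def mu1 : Measure ℝ := (volume.restrict (Set.Icc (0:ℝ) 1)).withDensity f1
noncomputable def mu2 : Measure ℝ := (volume.restrict (Set.Icc (0:ℝ) 1)).withDensity f2

/-- Weak Pareto optimality of the allocation `(A, X \ A)`. -/
def WeaklyPO (ν₁ ν₂ : Measure ℝ) (X A : Set ℝ) : Prop :=
  ¬ ∃ B ⊆ X, ν₁ A < ν₁ B ∧ ν₂ (X \ A) < ν₂ (X \ B)

/-! Each density equals `2/5` plus `6/5` on the owner's favourite half `P` of `[0,1]`, so the
owner values a set `S` at `2/5 |S ∩ [0,1]| + 6/5 |S ∩ P ∩ [0,1]|`. The halves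
`P₁ = (0,1/4) ∪ (1/2,3/4)` and `P₂ = (1/4,1/2) ∪ (3/4,1)` are disjoint, so the allocation
`(P₁, [0,1] \ P₁)` gives each player their whole favourite half, worth `4/5`, while the cut at
`1/2` gives each of them only half of it, worth `1/2`. -/

open Set

theorem MeasureTheory.withDensity_ite_apply {α : Type*} [MeasurableSpace α] (μ : Measure α)
    {U S : Set α} [DecidablePred (· ∈ U)] (hU : MeasurableSet U) (hS : MeasurableSet S)
    {a b : ℝ≥0∞} (hba : b ≤ a) :
    μ.withDensity (fun x => if x ∈ U then a else b) S = b * μ S + (a - b) * μ (S ∩ U) := by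
  have hdensity :
      (fun x => if x ∈ U then a else b) = fun x => b + U.indicator (fun _ => a - b) x := by
    funext x
    by_cases hx : x ∈ U <;> simp [hx, add_tsub_cancel_of_le hba]
  rw [hdensity, withDensity_apply _ hS, lintegral_add_left measurable_const,
    lintegral_indicator hU, setLIntegral_const, setLIntegral_const,
    Measure.restrict_apply hU, inter_comm U S]

theorem restrict_Icc_withDensity_ite_apply {U S : Set ℝ} [DecidablePred (· ∈ U)]
    (hU : MeasurableSet U) (hS : MeasurableSet S) :
    (volume.restrict (Icc (0:ℝ) 1)).withDensity (fun x => if x ∈ U then 8/5 else 2/5) S =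
      ENNReal.ofReal
        (2/5 * volume.real (S ∩ Icc 0 1) + 6/5 * volume.real (S ∩ U ∩ Icc 0 1)) := by
  have hsub : (8/5 : ℝ≥0∞) - 2/5 = 6/5 := by
    refine ENNReal.sub_eq_of_eq_add (by finiteness) ?_
    rw [ENNReal.div_add_div_same]
    norm_num
  rw [withDensity_ite_apply _ hU hS (by gcongr; norm_num), hsub,
    ← measureReal_restrict_apply hS, ← measureReal_restrict_apply (hS.inter hU),
    ENNReal.ofReal_add (by positivity) (by positivity), ENNReal.ofReal_mul (by norm_num),
    ENNReal.ofReal_mul (by norm_num), ofReal_measureReal, ofReal_measureReal,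
    ENNReal.ofReal_div_of_pos (by norm_num), ENNReal.ofReal_div_of_pos (by norm_num)]
  norm_num

local notation "P₁" => Ioo (0:ℝ) (1/4) ∪ Ioo (1/2 : ℝ) (3/4)
local notation "P₂" => Ioo (1/4 : ℝ) (1/2) ∪ Ioo (3/4 : ℝ) 1

theorem measurableSet_P₁ : MeasurableSet P₁ := measurableSet_Ioo.union measurableSet_Ioo

theorem P₁_subset_Icc : P₁ ⊆ Icc 0 1 := by
  intro x
  simp only [mem_union, mem_Icc, mem_Ioo]
  grind

theorem mu1_apply {S : Set ℝ} (hS : MeasurableSet S) :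
    mu1 S =
      ENNReal.ofReal (2/5 * volume.real (S ∩ Icc 0 1) + 6/5 * volume.real (S ∩ P₁ ∩ Icc 0 1)) :=
  restrict_Icc_withDensity_ite_apply measurableSet_P₁ hS

theorem mu2_apply {S : Set ℝ} (hS : MeasurableSet S) :
    mu2 S =
      ENNReal.ofReal (2/5 * volume.real (S ∩ Icc 0 1) + 6/5 * volume.real (S ∩ P₂ ∩ Icc 0 1)) :=
  restrict_Icc_withDensity_ite_apply (measurableSet_Ioo.union measurableSet_Ioo) hS

theorem volume_real_P₁ : volume.real P₁ = 1/2 := by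
  rw [measureReal_union (disjoint_left.2 fun x hx hx' => by linarith [hx.2, hx'.1])
      measurableSet_Ioo measure_Ioo_lt_top.ne measure_Ioo_lt_top.ne,
    Real.volume_real_Ioo_of_le (by norm_num), Real.volume_real_Ioo_of_le (by norm_num)]
  norm_num

theorem volume_real_P₂ : volume.real P₂ = 1/2 := by
  rw [measureReal_union (disjoint_left.2 fun x hx hx' => by linarith [hx.2, hx'.1])
      measurableSet_Ioo measure_Ioo_lt_top.ne measure_Ioo_lt_top.ne,
    Real.volume_real_Ioo_of_le (by norm_num), Real.volume_real_Ioo_of_le (by norm_num)]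
  norm_num

theorem mu1_Icc_zero_half : mu1 (Icc 0 (1/2)) = 1/2 := by
  have hP : Icc (0:ℝ) (1/2) ∩ P₁ ∩ Icc 0 1 = Ioo 0 (1/4) := by
    ext
    simp only [mem_inter_iff, mem_union, mem_Icc, mem_Ioo]
    grind
  rw [mu1_apply measurableSet_Icc, inter_eq_left.2 (Icc_subset_Icc_right (by norm_num)), hP,
    Real.volume_real_Icc, Real.volume_real_Ioo]
  norm_num [ENNReal.ofReal_div_of_pos]

theorem mu2_Icc_half_one : mu2 (Icc (1/2) 1) = 1/2 := by
  have hP : Icc (1/2 : ℝ) 1 ∩ P₂ ∩ Icc 0 1 = Ioo (3/4) 1 := by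
    ext
    simp only [mem_inter_iff, mem_union, mem_Icc, mem_Ioo]
    grind
  rw [mu2_apply measurableSet_Icc, inter_eq_left.2 (Icc_subset_Icc_left (by norm_num)), hP,
    Real.volume_real_Icc, Real.volume_real_Ioo]
  norm_num [ENNReal.ofReal_div_of_pos]

theorem mu2_Icc_sdiff_Icc_zero_half : mu2 (Icc 0 1 \ Icc 0 (1/2)) = 1/2 := by
  have hI : (Icc 0 1 \ Icc (0:ℝ) (1/2)) ∩ Icc 0 1 = Ioc (1/2) 1 := by
    ext
    simp only [mem_inter_iff, mem_sdiff, mem_Icc, mem_Ioc]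
    grind
  have hP : (Icc 0 1 \ Icc (0:ℝ) (1/2)) ∩ P₂ ∩ Icc 0 1 = Ioo (3/4) 1 := by
    ext
    simp only [mem_inter_iff, mem_sdiff, mem_union, mem_Icc, mem_Ioo]
    grind
  rw [mu2_apply (measurableSet_Icc.diff measurableSet_Icc), hI, hP, Real.volume_real_Ioc,
    Real.volume_real_Ioo]
  norm_num [ENNReal.ofReal_div_of_pos]

theorem mu1_P₁ : mu1 P₁ = 4/5 := by
  rw [mu1_apply measurableSet_P₁, inter_self, inter_eq_left.2 P₁_subset_Icc, volume_real_P₁]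
  norm_num [ENNReal.ofReal_div_of_pos]

theorem mu2_Icc_sdiff_P₁ : mu2 (Icc 0 1 \ P₁) = 4/5 := by
  have hP : (Icc 0 1 \ P₁) ∩ P₂ ∩ Icc 0 1 = P₂ := by
    ext
    simp only [mem_inter_iff, mem_sdiff, mem_union, mem_Icc, mem_Ioo]
    grind
  rw [mu2_apply (measurableSet_Icc.diff measurableSet_P₁), hP, inter_eq_left.2 sdiff_subset,
    volume_real_P₂, measureReal_sdiff P₁_subset_Icc measurableSet_P₁ measure_Icc_lt_top.ne,
    volume_real_P₁, Real.volume_real_Icc]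
  norm_num [ENNReal.ofReal_div_of_pos]

theorem stmt_6 :
    mu1 (Set.Icc (0:ℝ) (1/2)) = 1/2 ∧
    mu2 (Set.Icc (1/2 : ℝ) 1) = 1/2 ∧
    mu1 (Set.Ioo (0:ℝ) (1/4) ∪ Set.Ioo (1/2 : ℝ) (3/4)) = 4/5 ∧
    mu2 (Set.Icc (0:ℝ) 1 \ (Set.Ioo (0:ℝ) (1/4) ∪ Set.Ioo (1/2 : ℝ) (3/4))) = 4/5 ∧
    ¬ WeaklyPO mu1 mu2 (Set.Icc (0:ℝ) 1) (Set.Icc (0:ℝ) (1/2)) := by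
  have half_lt : (1/2 : ℝ≥0∞) < 4/5 := by
    rw [← ENNReal.toReal_lt_toReal (by finiteness) (by finiteness)]
    norm_num
  refine ⟨mu1_Icc_zero_half, mu2_Icc_half_one, mu1_P₁, mu2_Icc_sdiff_P₁, fun hPO => hPO ?_⟩
  refine ⟨P₁, P₁_subset_Icc, ?_, ?_⟩
  · rwa [mu1_Icc_zero_half, mu1_P₁]
  · rwa [mu2_Icc_sdiff_Icc_zero_half, mu2_Icc_sdiff_P₁]
end

section
/- Let F: [0,1] → [0,1] be a strictly increasing cdf with median a, and define F* by F*(x) = 1/2 − 2(1/2 − F(x))² for x ≤ a and F*(x) = 1/2 + 2(1/2 − F(x))² for x ≥ a. Then for all a < c < b ≤ 1, (F*(c) − 1/2)/(F*(b) − 1/2) < (F(c) − 1/2)/(F(b) − 1/2). -/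
/-! Above the median, `F* - 1/2 = 2 (F - 1/2)²`, so the left-hand ratio is the square of the
right-hand one, which lies strictly between `0` and `1`. -/

theorem sq_div_sq_lt_div {K : Type*} [Field K] [LinearOrder K] [IsStrictOrderedRing K]
    {u v : K} (hu : 0 < u) (huv : u < v) : u ^ 2 / v ^ 2 < u / v := by
  rw [← div_pow]
  exact pow_lt_self_of_lt_one₀ (div_pos hu (hu.trans huv)) ((div_lt_one (hu.trans huv)).mpr huv)
    one_lt_two

theorem stmt_13 (F : ℝ → ℝ) (a : ℝ)
    (ha : a ∈ Set.Icc (0:ℝ) 1)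
    (hmono : StrictMonoOn F (Set.Icc (0:ℝ) 1))
    (hFa : F a = 1/2)
    (Fstar : ℝ → ℝ)
    (hFstar : ∀ x, Fstar x =
      if x ≤ a then 1/2 - 2 * (1/2 - F x)^2 else 1/2 + 2 * (1/2 - F x)^2) :
    ∀ c b : ℝ, a < c → c < b → b ≤ 1 →
      (Fstar c - 1/2) / (Fstar b - 1/2) < (F c - 1/2) / (F b - 1/2) := by
  intro c b hac hcb hb1
  have hc : c ∈ Set.Icc (0:ℝ) 1 := ⟨ha.1.trans hac.le, hcb.le.trans hb1⟩
  have hb : b ∈ Set.Icc (0:ℝ) 1 := ⟨hc.1.trans hcb.le, hb1⟩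
  have hFc : 1/2 < F c := hFa ▸ hmono ha hc hac
  have hFcb : F c < F b := hmono hc hb hcb
  have hFstar_sub : ∀ x, a < x → Fstar x - 1/2 = 2 * (F x - 1/2) ^ 2 := fun x hx => by
    rw [hFstar, if_neg hx.not_ge]
    ring
  rw [hFstar_sub c hac, hFstar_sub b (hac.trans hcb), mul_div_mul_left _ _ two_ne_zero]
  exact sq_div_sq_lt_div (by linarith) (by linarith)
end

section
/- Let f₁ = 1.6 on (0,1/4)∪(1/2,3/4) and 0.4 elsewhere, and f₂ = 1.6 on (1/4,1/2)∪(3/4,1) and 0.4 elsewhere, on [0,1]. Then the allocation A = (0,1/4)∪(1/2,3/4) to player 1 and Aᶜ to player 2 gives μ₁(A) = μ₂(Aᶜ) = 0.8. -/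
open MeasureTheory ENNReal

/-! Each player's piece has length `1/2`, and on it the player's density is the constant `8/5`
(for player 2 only off the five endpoints `0, 1/4, 1/2, 3/4, 1`, a null set), so each piece is
worth `8/5 · 1/2 = 4/5`. -/

open Set

theorem MeasureTheory.withDensity_restrict_apply_of_ae_eq_const {α : Type*} [MeasurableSpace α]
    {μ : Measure α} {s t : Set α} {f : α → ℝ≥0∞} {c : ℝ≥0∞} (hs : MeasurableSet s)
    (hst : s ⊆ t) (hf : ∀ᵐ x ∂μ, x ∈ s → f x = c) :
    (μ.restrict t).withDensity f s = c * μ s := by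
  rw [withDensity_apply _ hs, Measure.restrict_restrict hs, inter_eq_left.2 hst,
    setLIntegral_congr_fun_ae hs hf, setLIntegral_const]

theorem Real.volume_Ioo_union_Ioo {a b c d : ℝ} (hbc : b ≤ c) :
    volume (Ioo a b ∪ Ioo c d) = ENNReal.ofReal (b - a) + ENNReal.ofReal (d - c) := by
  rw [measure_union _ measurableSet_Ioo, Real.volume_Ioo, Real.volume_Ioo]
  exact disjoint_left.2 fun x hx hx' => (hx.2.trans_le hbc).not_gt hx'.1

def piece1 : Set ℝ := Ioo 0 (1/4) ∪ Ioo (1/2) (3/4)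

def piece2 : Set ℝ := Ioo (1/4) (1/2) ∪ Ioo (3/4) 1

theorem measurableSet_piece1 : MeasurableSet piece1 := measurableSet_Ioo.union measurableSet_Ioo

theorem piece1_subset_Icc : piece1 ⊆ Icc 0 1 := by
  rintro x (⟨h₀, h₁⟩ | ⟨h₀, h₁⟩) <;> constructor <;> linarith

theorem volume_piece1 : volume piece1 = 2⁻¹ := by
  rw [piece1, Real.volume_Ioo_union_Ioo (by norm_num),
    ← ENNReal.ofReal_add (by norm_num) (by norm_num),
    show (1/4 - 0 + (3/4 - 1/2) : ℝ) = 2⁻¹ by norm_num, ENNReal.ofReal_inv_of_pos two_pos,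
    ENNReal.ofReal_ofNat]

theorem volume_Icc_sdiff_piece1 : volume (Icc 0 1 \ piece1) = 2⁻¹ := by
  rw [measure_sdiff piece1_subset_Icc measurableSet_piece1.nullMeasurableSet
    (by simp [volume_piece1]), Real.volume_Icc, volume_piece1]
  norm_num [ENNReal.one_sub_inv_two]

theorem mem_piece2_of_mem_Icc_sdiff_piece1 {x : ℝ} (hx : x ∈ Icc 0 1 \ piece1)
    (hx' : x ∉ ({0, 1/4, 1/2, 3/4, 1} : Set ℝ)) : x ∈ piece2 := by
  simp only [piece1, piece2, mem_sdiff, mem_Icc, mem_union, mem_Ioo, mem_insert_iff,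
    mem_singleton_iff] at *
  grind

theorem stmt_19 :
    mu1 (Set.Ioo (0:ℝ) (1/4) ∪ Set.Ioo (1/2 : ℝ) (3/4)) = 4/5 ∧
    mu2 (Set.Icc (0:ℝ) 1 \ (Set.Ioo (0:ℝ) (1/4) ∪ Set.Ioo (1/2 : ℝ) (3/4))) = 4/5 := by
  have hvalue : (8/5 : ℝ≥0∞) * 2⁻¹ = 4/5 := by
    rw [← ENNReal.toReal_eq_toReal_iff' (by finiteness) (by finiteness)]
    simp [ENNReal.toReal_div, ENNReal.toReal_mul]; norm_num
  show mu1 piece1 = 4/5 ∧ mu2 (Icc 0 1 \ piece1) = 4/5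
  constructor
  · rw [mu1, withDensity_restrict_apply_of_ae_eq_const (f := f1) measurableSet_piece1
      piece1_subset_Icc (.of_forall fun x hx => if_pos hx), volume_piece1, hvalue]
  · have hf2 : ∀ᵐ x, x ∈ Icc 0 1 \ piece1 → f2 x = 8/5 := by
      have hnull : volume ({0, 1/4, 1/2, 3/4, 1} : Set ℝ) = 0 := (toFinite _).measure_zero _
      filter_upwards [measure_eq_zero_iff_ae_notMem.1 hnull] with x hx hB
      exact if_pos (mem_piece2_of_mem_Icc_sdiff_piece1 hB hx)
    rw [mu2, withDensity_restrict_apply_of_ae_eq_const (measurableSet_Icc.diff measurableSet_piece1)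
      sdiff_subset hf2, volume_Icc_sdiff_piece1, hvalue]
end
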